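/- arXiv:math/0311418 — 2 statements merged into one kernel-verified Lean document; each statement's English description precedes it below -/
import Mathlib

section
/- Let λ be a strict partition, let o be the number of odd parts of λ and e the number of even parts of λ. Then there exists a bar tableau of shape λ with exactly max(o, e + (ℓ(λ) mod 2)) bars. -/
/-- A strict partition of `n`: a strictly decreasing list of positive integers summing to `n`. -/
def IsStrictPartition (n : ℕ) (l : List ℕ) : Prop :=
  l.Pairwise (· > ·) ∧ (∀ x ∈ l, 0 < x) ∧ l.sum = n

/-- A bar tableau of shape `l` (a strict partition), presented as the list of rows of labels:
(0) the row lengths are exactly the parts of `l` and all labels are positive;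
(1) entries weakly increase along each row;
(2) every label that appears does so in an odd total number of cells;
(3) every label appears in at most two rows, and if it appears in two rows then it begins
    (is a prefix of) both rows;
(4) for every `i`, the nonzero row lengths remaining after deleting all cells labelled `> i`
    are pairwise distinct. -/
def IsBarTableau (l : List ℕ) (T : List (List ℕ)) : Prop :=
  T.map List.length = l ∧
  (∀ row ∈ T, ∀ x ∈ row, 0 < x) ∧
  (∀ row ∈ T, row.Chain' (· ≤ ·)) ∧
  (∀ v ∈ T.flatten, Odd (T.flatten.count v)) ∧
  (∀ v : ℕ, T.countP (fun row => decide (v ∈ row)) ≤ 2) ∧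
  (∀ v : ℕ, T.countP (fun row => decide (v ∈ row)) = 2 →
      ∀ row ∈ T, v ∈ row → row.head? = some v) ∧
  (∀ i : ℕ,
    (((T.map (fun row => row.filter (fun x => decide (x ≤ i)))).map List.length).filter
        (fun k => decide (k ≠ 0))).Nodup)

/-- The number of bars of a tableau: the number of distinct labels used. -/
def numBars (T : List (List ℕ)) : ℕ := T.flatten.dedup.length

/-!
Build the tableau by induction on `|λ|`, each step adding one bar whose label exceeds all labels
used so far. If `λ` has an odd part `a` and an even part `b`, the two full rows `a` and `b` form
a single bar (`a + b` is odd and it occupies a prefix of both rows); this lowers `o` and `e` by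
one and `ℓ` by two. If all parts are odd, the first row alone is a bar. If all parts are even,
the last cell of the first row is a bar on top of a tableau of shape `(λ₁ - 1, λ₂, …)`,
whose bound `max(1, ℓ - 1 + ℓ mod 2)` is one less.

A filling is a bar tableau as soon as deleting its largest label leaves one and the conditions
hold for that label, since smaller labels and thresholds `i` below it see the same data. All
conditions except the shape are invariant under permuting rows, so the parts may be taken in
any order.
-/

def IsBarFilling (T : List (List ℕ)) : Prop :=
  (∀ row ∈ T, ∀ x ∈ row, 0 < x) ∧
  (∀ row ∈ T, row.IsChain (· ≤ ·)) ∧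
  (∀ v ∈ T.flatten, Odd (T.flatten.count v)) ∧
  (∀ v : ℕ, T.countP (fun row => decide (v ∈ row)) ≤ 2) ∧
  (∀ v : ℕ, T.countP (fun row => decide (v ∈ row)) = 2 →
      ∀ row ∈ T, v ∈ row → row.head? = some v) ∧
  (∀ i : ℕ,
    (((T.map (fun row => row.filter (fun x => decide (x ≤ i)))).map List.length).filter
        (fun k => decide (k ≠ 0))).Nodup)

theorem isBarTableau_iff {l : List ℕ} {T : List (List ℕ)} :
    IsBarTableau l T ↔ T.map List.length = l ∧ IsBarFilling T :=
  Iff.rfl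

namespace IsBarFilling

variable {T T' : List (List ℕ)}

theorem perm (hT : IsBarFilling T) (p : T.Perm T') : IsBarFilling T' := by
  obtain ⟨hpos, hsorted, hodd, hrows, hhead, hshape⟩ := hT
  refine ⟨fun row h => hpos row (p.mem_iff.2 h), fun row h => hsorted row (p.mem_iff.2 h),
    fun v h => ?_, fun v => ?_, fun v h2 row h => hhead v ?_ row (p.mem_iff.2 h),
    fun i => ?_⟩
  · rw [← p.flatten.count_eq]
    exact hodd v (p.flatten.mem_iff.2 h)
  · exact (p.countP_eq _).symm ▸ hrows v
  · exact (p.countP_eq _).trans h2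
  · exact ((p.map _).map _ |>.filter _).nodup_iff.1 (hshape i)

theorem cons_nil (hT : IsBarFilling T) : IsBarFilling ([] :: T) := by
  obtain ⟨hpos, hsorted, hodd, hrows, hhead, hshape⟩ := hT
  exact ⟨by simpa using hpos, by simpa using hsorted, by simpa using hodd, by simpa using hrows,
    by simpa using hhead, by simpa using hshape⟩

end IsBarFilling

theorem numBars_eq_of_perm {T T' : List (List ℕ)} (p : T.Perm T') : numBars T = numBars T' :=
  p.flatten.dedup.length_eq

@[simp]
theorem numBars_cons_nil (T : List (List ℕ)) : numBars ([] :: T) = numBars T := rfl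

def truncate (m : ℕ) (T : List (List ℕ)) : List (List ℕ) :=
  T.map (List.filter (fun x => decide (x < m)))

theorem truncate_eq_self {m : ℕ} {T : List (List ℕ)} (h : ∀ x ∈ T.flatten, x < m) :
    truncate m T = T := by
  refine (List.map_congr_left fun row hrow => List.filter_eq_self.2 fun x hx => ?_).trans
    (List.map_id T)
  exact decide_eq_true (h x (List.mem_flatten.2 ⟨row, hrow, hx⟩))

theorem head?_eq_of_head?_filter_lt {α : Type*} [LinearOrder α] {row : List α} {m v : α}
    (hrow : row.IsChain (· ≤ ·)) (hv : (row.filter (fun x => decide (x < m))).head? = some v) :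
    row.head? = some v := by
  cases row with
  | nil => simp at hv
  | cons w t =>
    by_cases hw : w < m
    · simpa [List.filter_cons, hw] using hv
    · have hge : ∀ x ∈ t, w ≤ x := fun _ hx =>
        List.rel_of_pairwise_cons (List.isChain_iff_pairwise.1 hrow) hx
      rw [List.filter_eq_nil_iff.2 fun x hx => by grind] at hv
      simp at hv

section truncate

variable {m v : ℕ} {T : List (List ℕ)}

theorem mem_filter_lt_iff {row : List ℕ} (hv : v < m) :
    v ∈ row.filter (fun x => decide (x < m)) ↔ v ∈ row := by
  simp [hv]

theorem count_flatten_truncate (hv : v < m) :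
    (truncate m T).flatten.count v = T.flatten.count v := by
  rw [truncate, ← List.filter_flatten, List.count_filter (by simpa using hv)]

theorem countP_mem_truncate (hv : v < m) :
    (truncate m T).countP (fun row => decide (v ∈ row)) =
      T.countP (fun row => decide (v ∈ row)) := by
  simp only [truncate, List.countP_map, Function.comp_def, mem_filter_lt_iff hv]

theorem map_filter_le_truncate {i : ℕ} (hi : i < m) :
    (truncate m T).map (fun row => row.filter (fun x => decide (x ≤ i))) =
      T.map (fun row => row.filter (fun x => decide (x ≤ i))) := by
  simp only [truncate, List.map_map, Function.comp_def, List.filter_filter]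
  congr! 3 with x
  grind

end truncate

theorem IsBarFilling.of_truncate {m : ℕ} {T : List (List ℕ)} (hm : 0 < m)
    (htr : IsBarFilling (truncate m T))
    (hle : ∀ x ∈ T.flatten, x ≤ m)
    (hsorted : ∀ row ∈ T, row.IsChain (· ≤ ·))
    (hodd : Odd (T.flatten.count m))
    (hrows : T.countP (fun row => decide (m ∈ row)) ≤ 2)
    (hhead : T.countP (fun row => decide (m ∈ row)) = 2 →
      ∀ row ∈ T, m ∈ row → row.head? = some m)
    (hshape : ((T.map List.length).filter (fun k => decide (k ≠ 0))).Nodup) :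
    IsBarFilling T := by
  obtain ⟨hpos', -, hodd', hrows', hhead', hshape'⟩ := htr
  replace hle : ∀ row ∈ T, ∀ x ∈ row, x ≤ m := fun row hrow x hx =>
    hle x (List.mem_flatten.2 ⟨row, hrow, hx⟩)
  have hmem : ∀ {row}, row ∈ T → row.filter (fun x => decide (x < m)) ∈ truncate m T :=
    List.mem_map_of_mem
  have habsent : ∀ v, m < v → ∀ row ∈ T, v ∉ row := fun v hv row hrow h =>
    (hle row hrow v h).not_gt hv
  refine ⟨fun row hrow x hx => ?_, hsorted, fun v hv => ?_, fun v => ?_,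
    fun v h2 row hrow hvrow => ?_, fun i => ?_⟩
  · rcases (hle row hrow x hx).lt_or_eq with hxm | rfl
    · exact hpos' _ (hmem hrow) x ((mem_filter_lt_iff hxm).2 hx)
    · exact hm
  · obtain ⟨row, hrow, hvrow⟩ := List.mem_flatten.1 hv
    rcases (hle row hrow v hvrow).lt_or_eq with hvm | rfl
    · rw [← count_flatten_truncate hvm]
      exact hodd' v (List.mem_flatten.2 ⟨_, hmem hrow, (mem_filter_lt_iff hvm).2 hvrow⟩)
    · exact hodd
  · rcases lt_trichotomy v m with hvm | rfl | hmv
    · exact countP_mem_truncate hvm ▸ hrows' v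
    · exact hrows
    · rw [List.countP_eq_zero.2 fun row hrow => by simpa using habsent v hmv row hrow]
      omega
  · rcases (hle row hrow v hvrow).lt_or_eq with hvm | rfl
    · refine head?_eq_of_head?_filter_lt (m := m) (hsorted row hrow) ?_
      exact hhead' v ((countP_mem_truncate hvm).trans h2) _ (hmem hrow)
        ((mem_filter_lt_iff hvm).2 hvrow)
    · exact hhead h2 row hrow hvrow
  · rcases lt_or_ge i m with him | hmi
    · simpa [map_filter_le_truncate him] using hshape' i
    · have : T.map (fun row => row.filter (fun x => decide (x ≤ i))) = T :=
        (List.map_congr_left fun row hrow => List.filter_eq_self.2 fun x hx =>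
          decide_eq_true ((hle row hrow x hx).trans hmi)).trans (List.map_id T)
      simpa [this] using hshape

theorem numBars_eq_numBars_truncate_add_one {m : ℕ} {T : List (List ℕ)}
    (hle : ∀ x ∈ T.flatten, x ≤ m) (hm : m ∈ T.flatten) :
    numBars T = numBars (truncate m T) + 1 := by
  have hlabels : T.flatten.toFinset = insert m ((truncate m T).flatten.toFinset) := by
    ext x
    simp only [truncate, ← List.filter_flatten, Finset.mem_insert, List.mem_toFinset,
      List.mem_filter, decide_eq_true_eq]
    grind
  rw [numBars, numBars, ← List.card_toFinset, ← List.card_toFinset, hlabels,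
    Finset.card_insert_of_notMem (by simp [truncate, ← List.filter_flatten])]

theorem exists_fresh_label (T : List (List ℕ)) : ∃ m, 0 < m ∧ ∀ x ∈ T.flatten, x < m :=
  ⟨T.flatten.sum + 1, Nat.succ_pos _, fun _ hx => Nat.lt_succ_of_le (List.le_sum_of_mem hx)⟩

theorem countP_mem_eq_zero {T : List (List ℕ)} {v : ℕ} (h : v ∉ T.flatten) :
    T.countP (fun row => decide (v ∈ row)) = 0 :=
  List.countP_eq_zero.2 fun row hrow => by
    simpa using fun hv => h (List.mem_flatten.2 ⟨row, hrow, hv⟩)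

theorem IsBarTableau.exists_cons {μ : List ℕ} {T : List (List ℕ)} {a : ℕ}
    (hT : IsBarTableau μ T) (ha : Odd a) (hnd : (a :: μ).Nodup) :
    ∃ T', IsBarTableau (a :: μ) T' ∧ numBars T' = numBars T + 1 := by
  obtain ⟨rfl, hfill⟩ := isBarTableau_iff.1 hT
  obtain ⟨m, hm0, hlt⟩ := exists_fresh_label T
  have hmT : m ∉ T.flatten := fun h => (hlt m h).false
  set T' := List.replicate a m :: T
  have htr : truncate m T' = [] :: T := by
    rw [truncate, List.map_cons, ← truncate, truncate_eq_self hlt]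
    simp
  have hle : ∀ x ∈ T'.flatten, x ≤ m := by
    simp only [T', List.flatten_cons, List.mem_append, List.mem_replicate]
    exact fun x hx => hx.elim (fun h => h.2.le) fun h => (hlt x h).le
  have hcountP : T'.countP (fun row => decide (m ∈ row)) = 1 := by
    simp [T', ha.pos.ne', countP_mem_eq_zero hmT]
  refine ⟨T', isBarTableau_iff.2 ⟨by simp [T'], ?_⟩, ?_⟩
  · refine IsBarFilling.of_truncate hm0 (htr ▸ hfill.cons_nil) hle ?_ ?_ (by omega) (by omega)
      (by simpa [T'] using hnd.filter _)
    · simp only [T', List.mem_cons, forall_eq_or_imp]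
      exact ⟨List.isChain_replicate_of_rel _ le_rfl, hfill.2.1⟩
    · simpa [T', List.count_replicate, List.count_eq_zero.2 hmT] using ha
  · rw [numBars_eq_numBars_truncate_add_one hle (by simp [T', ha.pos.ne']), htr,
      numBars_cons_nil]

theorem IsBarTableau.exists_cons_cons {μ : List ℕ} {T : List (List ℕ)} {a b : ℕ}
    (hT : IsBarTableau μ T) (hab : Odd (a + b)) (hnd : (a :: b :: μ).Nodup) :
    ∃ T', IsBarTableau (a :: b :: μ) T' ∧ numBars T' = numBars T + 1 := by
  obtain ⟨rfl, hfill⟩ := isBarTableau_iff.1 hT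
  obtain ⟨m, hm0, hlt⟩ := exists_fresh_label T
  have hmT : m ∉ T.flatten := fun h => (hlt m h).false
  set T' := List.replicate a m :: List.replicate b m :: T
  have htr : truncate m T' = [] :: [] :: T := by
    rw [truncate, List.map_cons, List.map_cons, ← truncate, truncate_eq_self hlt]
    simp
  have hle : ∀ x ∈ T'.flatten, x ≤ m := by
    simp only [T', List.flatten_cons, List.mem_append, List.mem_replicate]
    exact fun x hx => hx.elim (fun h => h.2.le) fun h => h.elim (fun h => h.2.le)
      fun h => (hlt x h).le
  refine ⟨T', isBarTableau_iff.2 ⟨by simp [T'], ?_⟩, ?_⟩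
  · refine IsBarFilling.of_truncate hm0 (htr ▸ hfill.cons_nil.cons_nil) hle ?_ ?_ ?_ ?_
      (by simpa [T'] using hnd.filter _)
    · simp only [T', List.mem_cons, forall_eq_or_imp]
      exact ⟨List.isChain_replicate_of_rel _ le_rfl, List.isChain_replicate_of_rel _ le_rfl,
        hfill.2.1⟩
    · simpa [T', List.count_replicate, List.count_eq_zero.2 hmT, ← add_assoc] using hab
    · simp only [T', List.countP_cons, countP_mem_eq_zero hmT]
      split_ifs <;> omega
    · intro _ row hrow hmrow
      simp only [T', List.mem_cons] at hrow
      rcases hrow with rfl | rfl | hrow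
      · grind [List.head?_replicate]
      · grind [List.head?_replicate]
      · exact absurd (List.mem_flatten.2 ⟨row, hrow, hmrow⟩) hmT
  · have hmT' : m ∈ T'.flatten := by
      have := hab.pos
      simp only [T', List.flatten_cons, List.mem_append, List.mem_replicate, and_true]
      omega
    rw [numBars_eq_numBars_truncate_add_one hle hmT', htr, numBars_cons_nil, numBars_cons_nil]

theorem IsBarTableau.exists_succ_head {μ : List ℕ} {T : List (List ℕ)} {c : ℕ}
    (hT : IsBarTableau (c :: μ) T) (hnd : ((c + 1) :: μ).Nodup) :
    ∃ T', IsBarTableau ((c + 1) :: μ) T' ∧ numBars T' = numBars T + 1 := by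
  obtain ⟨hshape, hfill⟩ := isBarTableau_iff.1 hT
  obtain ⟨r, T₂, rfl⟩ : ∃ r T₂, T = r :: T₂ :=
    List.exists_cons_of_ne_nil (by rintro rfl; simp at hshape)
  simp only [List.map_cons, List.cons.injEq] at hshape
  obtain ⟨m, hm0, hlt⟩ := exists_fresh_label (r :: T₂)
  have hmT : m ∉ (r :: T₂).flatten := fun h => (hlt m h).false
  obtain ⟨hmr, hmT₂⟩ : m ∉ r ∧ m ∉ T₂.flatten := by simpa using hmT
  set T' := (r ++ [m]) :: T₂
  have htr : truncate m T' = r :: T₂ := by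
    rw [← truncate_eq_self hlt]
    simp [T', truncate]
  have hle : ∀ x ∈ T'.flatten, x ≤ m := by
    simp only [T', List.flatten_cons, List.mem_append, List.mem_singleton]
    rintro x ((hx | rfl) | hx)
    · exact (hlt x (by simp [hx])).le
    · exact le_rfl
    · exact (hlt x (by simp [hx])).le
  have hlen : T'.map List.length = (c + 1) :: μ := by simp [T', hshape]
  refine ⟨T', isBarTableau_iff.2 ⟨hlen, ?_⟩, ?_⟩
  · refine IsBarFilling.of_truncate hm0 (htr ▸ hfill) hle ?_ ?_ ?_ ?_ (hlen ▸ hnd.filter _)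
    · simp only [T', List.mem_cons, forall_eq_or_imp]
      refine ⟨List.isChain_append.2 ⟨hfill.2.1 r (by simp), List.isChain_singleton m, ?_⟩,
        fun row hrow => hfill.2.1 row (by simp [hrow])⟩
      simp only [List.head?_cons, Option.mem_def, Option.some.injEq, forall_eq']
      exact fun x hx => (hlt x (by simp [List.mem_of_getLast? hx])).le
    · simp [T', List.count_eq_zero.2 hmr, List.count_eq_zero.2 hmT₂]
    · simp [T', countP_mem_eq_zero hmT₂]
    · simp [T', countP_mem_eq_zero hmT₂]
  · rw [numBars_eq_numBars_truncate_add_one hle (by simp [T']), htr]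

theorem List.Perm.exists_perm_map_eq {α β : Type*} {f : α → β} {l₁ l₂ : List β}
    (p : l₁.Perm l₂) {l : List α} (hl : l.map f = l₁) :
    ∃ k, l.Perm k ∧ k.map f = l₂ := by
  induction p generalizing l with
  | nil => exact ⟨l, .refl l, hl⟩
  | cons x _ ih =>
    obtain ⟨y, t, rfl, rfl, ht⟩ := List.map_eq_cons_iff.1 hl
    obtain ⟨k, hk, rfl⟩ := ih ht
    exact ⟨y :: k, hk.cons y, rfl⟩
  | swap x y _ =>
    obtain ⟨a, l', rfl, rfl, hl'⟩ := List.map_eq_cons_iff.1 hl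
    obtain ⟨b, t, rfl, rfl, rfl⟩ := List.map_eq_cons_iff.1 hl'
    exact ⟨b :: a :: t, .swap b a t, rfl⟩
  | trans _ _ ih₁ ih₂ =>
    obtain ⟨k₁, hk₁, hmap⟩ := ih₁ hl
    obtain ⟨k₂, hk₂, rfl⟩ := ih₂ hmap
    exact ⟨k₂, hk₁.trans hk₂, rfl⟩

theorem IsBarTableau.exists_of_perm {l l' : List ℕ} {T : List (List ℕ)} (hT : IsBarTableau l T)
    (p : l.Perm l') : ∃ T', IsBarTableau l' T' ∧ numBars T' = numBars T := by
  obtain ⟨hshape, hfill⟩ := isBarTableau_iff.1 hT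
  obtain ⟨T', hTT', hshape'⟩ := p.exists_perm_map_eq hshape
  exact ⟨T', isBarTableau_iff.2 ⟨hshape', hfill.perm hTT'⟩, (numBars_eq_of_perm hTT').symm⟩

def barBound (l : List ℕ) : ℕ :=
  max (l.countP (fun x => decide (Odd x))) (l.countP (fun x => decide (Even x)) + l.length % 2)

theorem barBound_eq_of_perm {l l' : List ℕ} (p : l.Perm l') : barBound l = barBound l' := by
  simp only [barBound, p.countP_eq, p.length_eq]

theorem barBound_cons_cons {a b : ℕ} {l : List ℕ} (ha : Odd a) (hb : Even b) :
    barBound (a :: b :: l) = barBound l + 1 := by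
  simp only [barBound, List.countP_cons, List.length_cons, ha, hb, Nat.not_even_iff_odd.2 ha,
    Nat.not_odd_iff_even.2 hb, decide_true, decide_false, if_true, Bool.false_eq_true, if_false]
  omega

theorem barBound_cons_of_forall_odd {a : ℕ} {l : List ℕ} (ha : Odd a)
    (hl : ∀ x ∈ l, Odd x) : barBound (a :: l) = barBound l + 1 := by
  have ho : l.countP (fun x => decide (Odd x)) = l.length := List.countP_eq_length.2 (by simpa)
  have he : l.countP (fun x => decide (Even x)) = 0 :=
    List.countP_eq_zero.2 (by simpa [Nat.not_even_iff_odd])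
  simp only [barBound, List.countP_cons, List.length_cons, ho, he, ha,
    Nat.not_even_iff_odd.2 ha, decide_true, decide_false, if_true, Bool.false_eq_true, if_false]
  omega

theorem barBound_succ_cons_of_forall_even {c : ℕ} {l : List ℕ} (hc : Odd c)
    (hl : ∀ x ∈ l, Even x) : barBound ((c + 1) :: l) = barBound (c :: l) + 1 := by
  have ho : l.countP (fun x => decide (Odd x)) = 0 :=
    List.countP_eq_zero.2 (by simpa [Nat.not_odd_iff_even])
  have he : l.countP (fun x => decide (Even x)) = l.length := List.countP_eq_length.2 (by simpa)
  have hc' : Even (c + 1) := hc.add_one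
  simp only [barBound, List.countP_cons, List.length_cons, ho, he, hc, hc',
    Nat.not_even_iff_odd.2 hc, Nat.not_odd_iff_even.2 hc', decide_true, decide_false, if_true,
    Bool.false_eq_true, if_false]
  omega

def HasMinimalBarTableau (l : List ℕ) : Prop :=
  ∃ T, IsBarTableau l T ∧ numBars T = barBound l

namespace HasMinimalBarTableau

theorem nil : HasMinimalBarTableau [] :=
  ⟨[], isBarTableau_iff.2 ⟨rfl, by simp [IsBarFilling]⟩, rfl⟩

theorem of_perm {l l' : List ℕ} (h : HasMinimalBarTableau l) (p : l.Perm l') :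
    HasMinimalBarTableau l' := by
  obtain ⟨T, hT, hbars⟩ := h
  obtain ⟨T', hT', hbars'⟩ := hT.exists_of_perm p
  exact ⟨T', hT', by rw [hbars', hbars, barBound_eq_of_perm p]⟩

theorem cons_cons {l : List ℕ} {a b : ℕ} (h : HasMinimalBarTableau l) (ha : Odd a)
    (hb : Even b) (hnd : (a :: b :: l).Nodup) : HasMinimalBarTableau (a :: b :: l) := by
  obtain ⟨T, hT, hbars⟩ := h
  obtain ⟨T', hT', hbars'⟩ := hT.exists_cons_cons (ha.add_even hb) hnd
  exact ⟨T', hT', by rw [hbars', hbars, barBound_cons_cons ha hb]⟩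

theorem cons_of_forall_odd {l : List ℕ} {a : ℕ} (h : HasMinimalBarTableau l) (ha : Odd a)
    (hl : ∀ x ∈ l, Odd x) (hnd : (a :: l).Nodup) : HasMinimalBarTableau (a :: l) := by
  obtain ⟨T, hT, hbars⟩ := h
  obtain ⟨T', hT', hbars'⟩ := hT.exists_cons ha hnd
  exact ⟨T', hT', by rw [hbars', hbars, barBound_cons_of_forall_odd ha hl]⟩

theorem succ_cons_of_forall_even {l : List ℕ} {c : ℕ} (h : HasMinimalBarTableau (c :: l))
    (hc : Odd c) (hl : ∀ x ∈ l, Even x) (hnd : ((c + 1) :: l).Nodup) :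
    HasMinimalBarTableau ((c + 1) :: l) := by
  obtain ⟨T, hT, hbars⟩ := h
  obtain ⟨T', hT', hbars'⟩ := hT.exists_succ_head hnd
  exact ⟨T', hT', by rw [hbars', hbars, barBound_succ_cons_of_forall_even hc hl]⟩

end HasMinimalBarTableau

theorem hasMinimalBarTableau_of_nodup (l : List ℕ) (hl : l.Nodup) (hpos : ∀ x ∈ l, 0 < x) :
    HasMinimalBarTableau l := by
  -- on the sum, not the length: the all-even step keeps the number of parts
  induction hs : l.sum using Nat.strong_induction_on generalizing l with
  | _ s ih =>
  subst hs
  by_cases hmix : (∃ a ∈ l, Odd a) ∧ ∃ b ∈ l, Even b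
  · obtain ⟨⟨a, ha, hao⟩, b, hb, hbe⟩ := hmix
    have hba : b ∈ l.erase a :=
      (List.mem_erase_of_ne (by rintro rfl; exact Nat.not_even_iff_odd.2 hao hbe)).2 hb
    have p : l.Perm (a :: b :: (l.erase a).erase b) :=
      (List.perm_cons_erase ha).trans ((List.perm_cons_erase hba).cons a)
    have hnd := p.nodup_iff.1 hl
    have hsum : l.sum = a + (b + ((l.erase a).erase b).sum) := p.sum_eq
    have hrest := ih _ (by have := hpos a ha; omega) _ hnd.of_cons.of_cons
      (fun x hx => hpos x (p.symm.subset (by simp [hx]))) rfl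
    exact (hrest.cons_cons hao hbe hnd).of_perm p.symm
  cases l with
  | nil => exact .nil
  | cons a rest =>
  have hsum : (a :: rest).sum = a + rest.sum := List.sum_cons
  have ha0 := hpos a List.mem_cons_self
  rcases not_and_or.1 hmix with hnoodd | hnoeven
  · have heven : ∀ x ∈ a :: rest, Even x := by simpa [Nat.not_odd_iff_even] using hnoodd
    obtain ⟨c, rfl⟩ := Nat.exists_eq_add_one_of_ne_zero ha0.ne'
    have hc : Odd c := Nat.not_even_iff_odd.1 (Nat.even_add_one.1 (heven _ List.mem_cons_self))
    have hrest : ∀ x ∈ rest, Even x := fun x hx => heven x (List.mem_cons_of_mem _ hx)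
    have hnd : (c :: rest).Nodup :=
      List.nodup_cons.2 ⟨fun h => Nat.not_even_iff_odd.2 hc (hrest c h), hl.of_cons⟩
    have hpos' : ∀ x ∈ c :: rest, 0 < x := by
      simpa [hc.pos] using fun x hx => hpos x (List.mem_cons_of_mem _ hx)
    have hsmaller := ih (c + rest.sum) (by omega) _ hnd hpos' List.sum_cons
    exact hsmaller.succ_cons_of_forall_even hc hrest hl
  · have hodd : ∀ x ∈ a :: rest, Odd x := by simpa [Nat.not_even_iff_odd] using hnoeven
    have hrest := ih _ (by omega) rest hl.of_cons
      (fun x hx => hpos x (List.mem_cons_of_mem _ hx)) rfl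
    exact hrest.cons_of_forall_odd (hodd a List.mem_cons_self)
      (fun x hx => hodd x (List.mem_cons_of_mem _ hx)) hl

/-- There exists a bar tableau of shape `λ` with exactly `max(o, e + (ℓ(λ) mod 2))` bars. -/
theorem exists_minimal_barTableau (n : ℕ) (l : List ℕ) (h : IsStrictPartition n l) :
    ∃ T : List (List ℕ), IsBarTableau l T ∧
      numBars T = max (l.countP (fun x => decide (Odd x)))
        (l.countP (fun x => decide (Even x)) + l.length % 2) := by
  obtain ⟨hdecr, hpos, -⟩ := h
  exact hasMinimalBarTableau_of_nodup l (hdecr.imp ne_of_gt) hpos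
end

section
/- Let λ be a strict partition of n, and write Schur's Q-function Q_λ in the basis of power sum symmetric functions: Q_λ = Σ_π c_π p_π, where the sum is over partitions π of n and p_π = p_{π_1} p_{π_2} ⋯. Then every π with c_π ≠ 0 satisfies ℓ(π) ≥ srank(λ), where srank(λ) = max(o, e + (ℓ(λ) mod 2)) with o and e the numbers of odd and even parts of λ. Equivalently, assigning deg(p_i) = 1, the terms of lowest degree in Q_λ have degree at least srank(λ). -/
open scoped Classical

/-- The `i`-th part of `l` (1-indexed); parts beyond the length are `0`. -/
def partAt (l : List ℕ) (i : ℕ) : ℕ := l.getD (i - 1) 0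

/-- The monomial symmetric function `m_μ`, as a formal power series in the variables
`x_0, x_1, x_2, …`: the coefficient of a monomial is `1` exactly when the multiset of its
nonzero exponents is `μ`. -/
noncomputable def mSym (μ : Multiset ℕ) : MvPowerSeries ℕ ℚ :=
  fun d => if d.support.val.map d = μ then 1 else 0

/-- The power sum symmetric function `p_k = Σ_i x_i^k`. -/
noncomputable def pFun (k : ℕ) : MvPowerSeries ℕ ℚ :=
  fun d => if ∃ i : ℕ, d = Finsupp.single i k then 1 else 0

/-- `q_k = Σ_{μ ⊢ k} 2^{ℓ(μ)} m_μ`. -/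
noncomputable def qFun (k : ℕ) : MvPowerSeries ℕ ℚ :=
  ∑ μ : Nat.Partition k,
    MvPowerSeries.C (σ := ℕ) (R := ℚ) ((2 : ℚ) ^ (Multiset.card μ.parts)) * mSym μ.parts

/-- `p_π = p_{π_1} p_{π_2} ⋯` for a partition `π` of `n`. -/
noncomputable def pProd {n : ℕ} (π : Nat.Partition n) : MvPowerSeries ℕ ℚ :=
  (π.parts.map pFun).prod

/-!
Let `P m` (`psumFiltration m`) be the `ℚ`-span of the power-sum products `p_μ` with `μ` of
length at least `m`, so that `P m * P m' ≤ P (m + m')`. The Newton-type identity `k q_k = 2 Σ_{j odd} p_j q_{k-j}` puts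
`q_k` in `P 1` for odd `k` and in `P 2` for even `k > 0`. Schur's recursion then puts `Q_λ` in
`P (srank λ)`, since srank is subadditive along it: removing one part of an odd-length `λ` costs
`q` of that part, splitting off a pair from an even-length `λ` costs `Q` of that pair. Finally the
`p_μ` with positive parts are linearly independent (read off the coefficient of a monomial whose
exponents are the parts of a longest `μ`), so `Q_λ` has no component along `p_π` with
`ℓ(π) < srank λ`.
-/

open MvPowerSeries
open scoped Finset

def expMultiset (d : ℕ →₀ ℕ) : Multiset ℕ := d.support.val.map d

lemma card_expMultiset (d : ℕ →₀ ℕ) : Multiset.card (expMultiset d) = d.support.card :=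
  Multiset.card_map _ _

lemma expMultiset_eq_zero_iff {d : ℕ →₀ ℕ} : expMultiset d = 0 ↔ d = 0 := by
  rw [← Multiset.card_eq_zero, card_expMultiset, Finset.card_eq_zero, Finsupp.support_eq_empty]

lemma expMultiset_eq_cons_erase {d : ℕ →₀ ℕ} {i : ℕ} (hi : i ∈ d.support) :
    expMultiset d = d i ::ₘ expMultiset (d.erase i) := by
  rw [expMultiset, expMultiset, Finsupp.support_erase, ← Finset.insert_erase hi,
    Finset.insert_val_of_notMem (Finset.notMem_erase i _), Multiset.map_cons,
    Finset.erase_insert_eq_erase, Finset.erase_idem]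
  congr 1
  refine Multiset.map_congr rfl fun j hj => ?_
  rw [Finsupp.erase_ne (Finset.ne_of_mem_erase hj)]

lemma sum_expMultiset (d : ℕ →₀ ℕ) : (expMultiset d).sum = d.degree := rfl

lemma sub_single_self_eq_erase (d : ℕ →₀ ℕ) (i : ℕ) :
    d - Finsupp.single i (d i) = d.erase i := by
  ext j
  by_cases h : j = i <;> simp [h, Finsupp.erase_ne]

lemma support_sub_single_of_lt {d : ℕ →₀ ℕ} {i k : ℕ} (h : k < d i) :
    (d - Finsupp.single i k).support = d.support := by
  ext j
  by_cases h' : j = i <;> simp [h']; omega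

lemma coeff_pFun_mul {k : ℕ} (hk : 0 < k) (g : MvPowerSeries ℕ ℚ) (d : ℕ →₀ ℕ) :
    coeff d (pFun k * g) =
      ∑ i ∈ d.support with k ≤ d i, coeff (d - Finsupp.single i k) g := by
  rw [coeff_mul]
  symm
  have hcoeff : ∀ e : ℕ →₀ ℕ,
      coeff e (pFun k) = if ∃ i, e = Finsupp.single i k then 1 else 0 := fun _ => rfl
  refine Finset.sum_of_injOn (fun i => (Finsupp.single i k, d - Finsupp.single i k)) ?_ ?_ ?_ ?_
  · intro i _ j _ hij
    exact Finsupp.single_left_injective hk.ne' (congrArg Prod.fst hij)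
  · intro i hi
    simp only [Finset.coe_filter] at hi
    simpa using add_tsub_cancel_of_le (Finsupp.single_le_iff.mpr hi.2)
  · rintro ⟨e, f⟩ hef hnot
    rw [hcoeff, ite_mul, one_mul, zero_mul, ite_eq_right_iff]
    rintro ⟨i, rfl⟩
    rw [Finset.HasAntidiagonal.mem_antidiagonal] at hef
    have hki : k ≤ d i := by rw [← hef]; simp
    refine absurd ⟨i, ?_, ?_⟩ hnot
    · simp only [Finset.coe_filter, Set.mem_ofPred_eq]
      exact ⟨Finsupp.mem_support_iff.mpr (by omega), hki⟩
    · simp [← hef]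
  · intro i _
    rw [hcoeff, if_pos ⟨i, rfl⟩, one_mul]

noncomputable def psumProd (M : Multiset ℕ) : MvPowerSeries ℕ ℚ := (M.map pFun).prod

@[simp] lemma psumProd_zero : psumProd 0 = 1 := by simp [psumProd]

@[simp] lemma psumProd_cons (a : ℕ) (M : Multiset ℕ) :
    psumProd (a ::ₘ M) = pFun a * psumProd M := by simp [psumProd]

lemma psumProd_add (M N : Multiset ℕ) : psumProd (M + N) = psumProd M * psumProd N := by
  simp [psumProd]

lemma coeff_psumProd_nonneg {M : Multiset ℕ} (hM : ∀ x ∈ M, 0 < x) (d : ℕ →₀ ℕ) :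
    0 ≤ coeff d (psumProd M) := by
  induction M using Multiset.induction_on generalizing d with
  | empty => rw [psumProd_zero, coeff_one]; split_ifs <;> norm_num
  | cons a M ih =>
    rw [Multiset.forall_mem_cons] at hM
    rw [psumProd_cons, coeff_pFun_mul hM.1]
    exact Finset.sum_nonneg fun i _ => ih hM.2 _

lemma expMultiset_eq_or_card_lt {M : Multiset ℕ} (hM : ∀ x ∈ M, 0 < x) {d : ℕ →₀ ℕ}
    (h : coeff d (psumProd M) ≠ 0) :
    expMultiset d = M ∨ Multiset.card (expMultiset d) < Multiset.card M := by
  induction M using Multiset.induction_on generalizing d with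
  | empty =>
    rw [psumProd_zero, coeff_one, ite_ne_right_iff] at h
    simp [expMultiset_eq_zero_iff.mpr h.1]
  | cons a M ih =>
    rw [Multiset.forall_mem_cons] at hM
    rw [psumProd_cons, coeff_pFun_mul hM.1] at h
    obtain ⟨i, hi, hne⟩ := Finset.exists_ne_zero_of_sum_ne_zero h
    rw [Finset.mem_filter] at hi
    have key := ih hM.2 hne
    rcases hi.2.eq_or_lt with hdi | hdi
    · rw [hdi, sub_single_self_eq_erase] at key
      rw [expMultiset_eq_cons_erase hi.1, ← hdi, Multiset.cons_inj_right, Multiset.card_cons,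
        Multiset.card_cons]
      exact key.imp_right (by omega)
    · have hcard : Multiset.card (expMultiset d) =
          Multiset.card (expMultiset (d - Finsupp.single i a)) := by
        rw [card_expMultiset, card_expMultiset, support_sub_single_of_lt hdi]
      right
      rw [hcard, Multiset.card_cons]
      rcases key with key | key
      · rw [key]; omega
      · omega

lemma coeff_psumProd_pos {M : Multiset ℕ} (hM : ∀ x ∈ M, 0 < x) {d : ℕ →₀ ℕ}
    (h : expMultiset d = M) :
    0 < coeff d (psumProd M) := by
  induction M using Multiset.induction_on generalizing d with
  | empty => simp [expMultiset_eq_zero_iff.mp h]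
  | cons a M ih =>
    rw [Multiset.forall_mem_cons] at hM
    obtain ⟨i, hi, hdi⟩ := Multiset.mem_map.mp (h ▸ Multiset.mem_cons_self a M)
    rw [expMultiset_eq_cons_erase hi, hdi, Multiset.cons_inj_right] at h
    rw [psumProd_cons, coeff_pFun_mul hM.1]
    refine Finset.sum_pos' (fun j _ => coeff_psumProd_nonneg hM.2 _)
      ⟨i, Finset.mem_filter.mpr ⟨hi, hdi.ge⟩, ih hM.2 ?_⟩
    rwa [← hdi, sub_single_self_eq_erase]

lemma exists_expMultiset_eq {M : Multiset ℕ} (hM : ∀ x ∈ M, 0 < x) :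
    ∃ d, expMultiset d = M := by
  induction M using Multiset.induction_on with
  | empty => exact ⟨0, expMultiset_eq_zero_iff.mpr rfl⟩
  | cons a M ih =>
    rw [Multiset.forall_mem_cons] at hM
    obtain ⟨d, rfl⟩ := ih hM.2
    obtain ⟨N, hN⟩ := Infinite.exists_notMem_finset d.support
    have hdN : d N = 0 := Finsupp.notMem_support_iff.mp hN
    refine ⟨d + Finsupp.single N a, ?_⟩
    have hN' : N ∈ (d + Finsupp.single N a).support := by simpa [hdN] using hM.1.ne'
    rw [expMultiset_eq_cons_erase hN', Finsupp.erase_add,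
      Finsupp.erase_single, add_zero, Finsupp.erase_of_notMem_support hN]
    simp [hdN]

theorem linearIndepOn_psumProd : LinearIndepOn ℚ psumProd {M | ∀ x ∈ M, 0 < x} := by
  rw [linearIndepOn_iff]
  intro l hl hcomb
  by_contra hne
  obtain ⟨M₁, hM₁, hmax⟩ :=
    Finset.exists_max_image l.support Multiset.card (Finsupp.support_nonempty_iff.mpr hne)
  obtain ⟨d, hd⟩ := exists_expMultiset_eq (hl hM₁)
  have hcoeff := congrArg (coeff d) hcomb
  rw [Finsupp.linearCombination_apply, Finsupp.sum, map_sum, map_zero,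
    Finset.sum_eq_single M₁] at hcoeff
  · rw [map_smul, smul_eq_mul, mul_eq_zero] at hcoeff
    exact hcoeff.elim (Finsupp.mem_support_iff.mp hM₁) (coeff_psumProd_pos (hl hM₁) hd).ne'
  · intro M hM hMM₁
    rw [map_smul, smul_eq_mul, mul_eq_zero]
    right
    by_contra hM0
    rcases expMultiset_eq_or_card_lt (hl hM) hM0 with h | h
    · exact hMM₁ (h.symm.trans hd)
    · exact (hmax M hM).not_gt (hd ▸ h)
  · exact fun h => absurd hM₁ h

noncomputable def psumFiltration (m : ℕ) : Submodule ℚ (MvPowerSeries ℕ ℚ) :=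
  Submodule.span ℚ (psumProd '' {M | (∀ x ∈ M, 0 < x) ∧ m ≤ Multiset.card M})

lemma psumFiltration_antitone : Antitone psumFiltration :=
  fun _ _ h => Submodule.span_mono (Set.image_mono fun _ hM => ⟨hM.1, h.trans hM.2⟩)

lemma mul_mem_psumFiltration {f g : MvPowerSeries ℕ ℚ} {m m' : ℕ}
    (hf : f ∈ psumFiltration m) (hg : g ∈ psumFiltration m') :
    f * g ∈ psumFiltration (m + m') := by
  have hfg := Submodule.mul_mem_mul hf hg
  rw [psumFiltration, psumFiltration, Submodule.span_mul_span] at hfg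
  refine Submodule.span_le.mpr ?_ hfg
  rintro _ ⟨_, ⟨M, hM, rfl⟩, _, ⟨N, hN, rfl⟩, rfl⟩
  refine Submodule.subset_span ⟨M + N, ⟨?_, ?_⟩, psumProd_add M N⟩
  · simpa using fun x hx => hx.elim (hM.1 x) (hN.1 x)
  · rw [Multiset.card_add]
    exact add_le_add hM.2 hN.2

lemma pFun_mem_psumFiltration_one {k : ℕ} (hk : 0 < k) : pFun k ∈ psumFiltration 1 :=
  Submodule.subset_span ⟨{k}, ⟨by simpa using hk, by simp⟩, by simp [psumProd]⟩

lemma MvPowerSeries.C_mul_mem {σ R : Type*} [CommSemiring R] (p : Submodule R (MvPowerSeries σ R))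
    (r : R) {f : MvPowerSeries σ R} (hf : f ∈ p) : C r * f ∈ p := by
  rw [← smul_eq_C_mul]
  exact p.smul_mem r hf

lemma coeff_eq_zero_of_sum_mem_psumFiltration {n m : ℕ} {c : Nat.Partition n → ℚ}
    (h : ∑ π, c π • pProd π ∈ psumFiltration m) {π : Nat.Partition n}
    (hπ : Multiset.card π.parts < m) : c π = 0 := by
  obtain ⟨g, hg, hgc⟩ := (Finsupp.mem_span_image_iff_linearCombination ℚ).mp h
  set f : Multiset ℕ →₀ ℚ := ∑ π, Finsupp.single π.parts (c π)
  have hf : f ∈ Finsupp.supported ℚ ℚ {M : Multiset ℕ | ∀ x ∈ M, 0 < x} :=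
    Submodule.sum_mem _ fun π _ => Finsupp.single_mem_supported ℚ _ fun _ => π.parts_pos
  have hfc : Finsupp.linearCombination ℚ psumProd f = ∑ π, c π • pProd π := by
    simp [f, map_sum, pProd, psumProd]
  have hfg := linearIndepOn_iffₛ.mp linearIndepOn_psumProd f hf g
    (Finsupp.supported_mono (fun M hM => hM.1) hg) (hfc.trans hgc.symm)
  have hfπ : f π.parts = c π := by
    rw [Finsupp.finsetSum_apply, Finset.sum_eq_single π]
    · simp
    · intro π' _ hne
      exact Finsupp.single_eq_of_ne fun h => hne (Nat.Partition.ext h.symm)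
    · simp
  rw [← hfπ, hfg]
  exact (Finsupp.mem_supported' ℚ g).mp hg _ fun h => hπ.not_ge h.2

lemma coeff_qFun (k : ℕ) (d : ℕ →₀ ℕ) :
    coeff d (qFun k) = if d.degree = k then 2 ^ d.support.card else 0 := by
  have hm : ∀ μ, coeff d (mSym μ) = if expMultiset d = μ then 1 else 0 := fun _ => rfl
  simp only [qFun, map_sum, coeff_C_mul, hm, mul_ite, mul_one, mul_zero]
  split_ifs with hdeg
  · let μ₀ : Nat.Partition k :=
      ⟨expMultiset d, fun hx => by
        obtain ⟨i, hi, rfl⟩ := Multiset.mem_map.mp hx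
        exact Nat.pos_of_ne_zero (Finsupp.mem_support_iff.mp hi), hdeg⟩
    have hμ₀ : ∀ μ : Nat.Partition k, expMultiset d = μ.parts ↔ μ₀ = μ :=
      fun μ => ⟨fun h => Nat.Partition.ext (show μ₀.parts = μ.parts from h),
        fun h => h ▸ rfl⟩
    simp only [hμ₀, Finset.sum_ite_eq, Finset.mem_univ, if_true, μ₀, card_expMultiset]
  · refine Finset.sum_eq_zero fun μ _ => if_neg fun h => hdeg ?_
    rw [← sum_expMultiset, h, μ.parts_sum]

lemma degree_sub_single {d : ℕ →₀ ℕ} {i j : ℕ} (h : j ≤ d i) :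
    (d - Finsupp.single i j).degree = d.degree - j := by
  have := congrArg Finsupp.degree (tsub_add_cancel_of_le (Finsupp.single_le_iff.mpr h))
  rw [map_add, Finsupp.degree_single] at this
  omega

lemma two_pow_card_support_sub_single {d : ℕ →₀ ℕ} {i j : ℕ} (hj : 0 < j)
    (h : j ≤ d i) :
    (2 : ℚ) ^ (d - Finsupp.single i j).support.card =
      2 ^ d.support.card * if j = d i then 2⁻¹ else 1 := by
  split_ifs with hji
  · have hi : i ∈ d.support := Finsupp.mem_support_iff.mpr (by omega)
    rw [hji, sub_single_self_eq_erase, Finsupp.support_erase, Finset.card_erase_of_mem hi,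
      pow_sub₀ _ two_ne_zero (Finset.card_pos.mpr ⟨i, hi⟩), pow_one]
  · rw [support_sub_single_of_lt (lt_of_le_of_ne h hji), mul_one]

lemma two_mul_card_odd_Icc (m : ℕ) : 2 * #{j ∈ Finset.Icc 1 m | Odd j} = m + m % 2 := by
  induction m with
  | zero => rfl
  | succ m ih =>
    rw [← Finset.insert_Icc_right_eq_Icc_add_one (by omega), Finset.filter_insert]
    split_ifs with h
    · rw [Finset.card_insert_of_notMem (by simp), mul_add, ih]
      rw [Nat.odd_iff] at h
      omega
    · rw [ih]
      rw [Nat.odd_iff] at h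
      omega

lemma sum_odd_Icc_ite_inv_two (m : ℕ) :
    ∑ j ∈ Finset.Icc 1 m with Odd j, (if j = m then (2 : ℚ)⁻¹ else 1) = m / 2 := by
  have hsplit : ∀ j, (if j = m then (2 : ℚ)⁻¹ else 1) = 1 - if j = m then 2⁻¹ else 0 := by
    intro j; split_ifs <;> norm_num
  have hcard : (2 : ℚ) * #{j ∈ Finset.Icc 1 m | Odd j} = m + (m % 2 : ℕ) := by
    exact_mod_cast two_mul_card_odd_Icc m
  simp only [hsplit, Finset.sum_sub_distrib, Finset.sum_const, nsmul_eq_mul, mul_one,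
    Finset.sum_ite_eq', Finset.mem_filter, Finset.mem_Icc]
  rcases Nat.even_or_odd m with h | h
  · rw [Nat.even_iff.mp h, Nat.cast_zero] at hcard
    rw [if_neg fun h' => Nat.not_odd_iff_even.mpr h h'.2]
    linarith
  · rw [Nat.odd_iff.mp h, Nat.cast_one] at hcard
    rw [if_pos ⟨⟨h.pos, le_rfl⟩, h⟩]
    linarith

lemma coeff_pFun_mul_qFun_sub {j k : ℕ} (hj : 0 < j) (hjk : j ≤ k) (d : ℕ →₀ ℕ) :
    coeff d (pFun j * qFun (k - j)) = if d.degree = k then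
      ∑ i ∈ d.support with j ≤ d i, 2 ^ #d.support * if j = d i then (2 : ℚ)⁻¹ else 1
    else 0 := by
  rw [coeff_pFun_mul hj]
  split_ifs with hdeg
  · refine Finset.sum_congr rfl fun i hi => ?_
    rw [Finset.mem_filter] at hi
    rw [coeff_qFun, degree_sub_single hi.2, if_pos (by omega),
      two_pow_card_support_sub_single hj hi.2]
  · refine Finset.sum_eq_zero fun i hi => ?_
    rw [Finset.mem_filter] at hi
    have := Finsupp.le_degree i d
    rw [coeff_qFun, degree_sub_single hi.2, if_neg (by omega)]

theorem natCast_smul_qFun (k : ℕ) :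
    (k : ℚ) • qFun k =
      (2 : ℚ) • ∑ j ∈ Finset.Icc 1 k with Odd j, pFun j * qFun (k - j) := by
  ext d
  have hterm : ∀ j ∈ {j ∈ Finset.Icc 1 k | Odd j}, coeff d (pFun j * qFun (k - j)) =
      if d.degree = k then
        ∑ i ∈ d.support with j ≤ d i, 2 ^ #d.support * if j = d i then (2 : ℚ)⁻¹ else 1
      else 0 := by
    intro j hj
    simp only [Finset.mem_filter, Finset.mem_Icc] at hj
    exact coeff_pFun_mul_qFun_sub hj.1.1 hj.1.2 d
  rw [coeff_smul, coeff_smul, map_sum, Finset.sum_congr rfl hterm, Finset.sum_ite_irrel,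
    coeff_qFun]
  split_ifs with hdeg
  · have hswap : ∀ j i,
        (j ∈ {j ∈ Finset.Icc 1 k | Odd j} ∧ i ∈ {i ∈ d.support | j ≤ d i}) ↔
        (j ∈ {j ∈ Finset.Icc 1 (d i) | Odd j} ∧ i ∈ d.support) := by
      intro j i
      have := hdeg ▸ Finsupp.le_degree i d
      simp only [Finset.mem_filter, Finset.mem_Icc]
      constructor
      · rintro ⟨⟨⟨h1, -⟩, h3⟩, h4, h5⟩
        exact ⟨⟨⟨h1, h5⟩, h3⟩, h4⟩
      · rintro ⟨⟨⟨h1, h2⟩, h3⟩, h4⟩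
        exact ⟨⟨⟨h1, by omega⟩, h3⟩, h4, h2⟩
    rw [Finset.sum_comm' hswap]
    simp only [← Finset.mul_sum, sum_odd_Icc_ite_inv_two]
    rw [← Finset.sum_div, ← Nat.cast_sum, ← Finsupp.degree_apply, hdeg]
    ring
  · simp

lemma qFun_zero : qFun 0 = 1 := by
  ext d
  simp only [coeff_qFun, coeff_one, Finsupp.degree_eq_zero_iff]
  split_ifs with h
  · simp [h]
  · rfl

lemma qFun_mem_psumFiltration {k : ℕ} (hk : 0 < k) : qFun k ∈ psumFiltration (2 - k % 2) := by
  induction k using Nat.strong_induction_on with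
  | _ k ih =>
  rw [← inv_smul_smul₀ (Nat.cast_ne_zero.mpr hk.ne' : (k : ℚ) ≠ 0) (qFun k),
    natCast_smul_qFun]
  refine Submodule.smul_mem _ _ (Submodule.smul_mem _ _ (Submodule.sum_mem _ fun j hj => ?_))
  simp only [Finset.mem_filter, Finset.mem_Icc, Nat.odd_iff] at hj
  obtain hjk | hjk := hj.1.2.eq_or_lt
  · rw [hjk, Nat.sub_self, qFun_zero, mul_one]
    exact psumFiltration_antitone (by omega) (pFun_mem_psumFiltration_one hk)
  · exact psumFiltration_antitone (by omega)
      (mul_mem_psumFiltration (pFun_mem_psumFiltration_one hj.1.1)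
        (ih (k - j) (by omega) (by omega)))

def shiftedRank (l : List ℕ) : ℕ :=
  max (l.countP (fun x => decide (Odd x))) (l.countP (fun x => decide (Even x)) + l.length % 2)

lemma shiftedRank_perm {l l' : List ℕ} (h : l.Perm l') : shiftedRank l = shiftedRank l' := by
  rw [shiftedRank, shiftedRank, h.countP_eq, h.countP_eq, h.length_eq]

lemma shiftedRank_singleton (a : ℕ) : shiftedRank [a] = 2 - a % 2 := by
  simp only [shiftedRank, List.countP_singleton, List.length_singleton, decide_eq_true_eq,
    Nat.odd_iff, Nat.even_iff]
  split_ifs <;> omega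

lemma shiftedRank_pair (a b : ℕ) : shiftedRank [a, b] = 2 - (a + b) % 2 := by
  simp only [shiftedRank, List.countP_cons, List.countP_nil, List.length_cons, List.length_nil,
    decide_eq_true_eq, Nat.odd_iff, Nat.even_iff]
  split_ifs <;> omega

lemma shiftedRank_cons_le (a : ℕ) {l : List ℕ} (hl : Even l.length) :
    shiftedRank (a :: l) ≤ 2 - a % 2 + shiftedRank l := by
  rw [Nat.even_iff] at hl
  simp only [shiftedRank, List.countP_cons, List.length_cons, decide_eq_true_eq, Nat.odd_iff,
    Nat.even_iff]
  split_ifs <;> omega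

lemma shiftedRank_append_le {l₁ l₂ : List ℕ} (h₁ : Even l₁.length)
    (h₂ : Even l₂.length) :
    shiftedRank (l₁ ++ l₂) ≤ shiftedRank l₁ + shiftedRank l₂ := by
  rw [Nat.even_iff] at h₁ h₂
  simp only [shiftedRank, List.countP_append, List.length_append]
  omega

lemma qPair_mem_psumFiltration {a b : ℕ} (hb : 0 < b) (hba : b < a) :
    qFun a * qFun b +
        2 * ∑ m ∈ Finset.Icc 1 b, C ((-1 : ℚ) ^ m) * (qFun (a + m) * qFun (b - m))
      ∈ psumFiltration (shiftedRank [a, b]) := by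
  rw [shiftedRank_pair, two_mul]
  have hsum : ∑ m ∈ Finset.Icc 1 b, C ((-1 : ℚ) ^ m) * (qFun (a + m) * qFun (b - m))
      ∈ psumFiltration (2 - (a + b) % 2) := by
    refine Submodule.sum_mem _ fun m hm => C_mul_mem _ _ ?_
    rw [Finset.mem_Icc] at hm
    obtain hmb | hmb := hm.2.eq_or_lt
    · rw [hmb, Nat.sub_self, qFun_zero, mul_one]
      exact qFun_mem_psumFiltration (by omega)
    · exact psumFiltration_antitone (by omega) (mul_mem_psumFiltration
        (qFun_mem_psumFiltration (by omega)) (qFun_mem_psumFiltration (by omega)))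
  refine add_mem (psumFiltration_antitone (by omega) (mul_mem_psumFiltration
    (qFun_mem_psumFiltration (by omega)) (qFun_mem_psumFiltration hb))) (add_mem hsum hsum)

lemma oddExpansion_mem_psumFiltration {Q : List ℕ → MvPowerSeries ℕ ℚ} {l : List ℕ}
    (hpos : ∀ x ∈ l, 0 < x) (hl : Odd l.length)
    (hQ : ∀ i < l.length, Q (l.eraseIdx i) ∈ psumFiltration (shiftedRank (l.eraseIdx i))) :
    ∑ i ∈ Finset.Icc 1 l.length,
        C ((-1 : ℚ) ^ (i + 1)) * (qFun (partAt l i) * Q (l.eraseIdx (i - 1)))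
      ∈ psumFiltration (shiftedRank l) := by
  refine Submodule.sum_mem _ fun i hi => C_mul_mem _ _ ?_
  rw [Finset.mem_Icc] at hi
  have hi' : i - 1 < l.length := by omega
  have herase : Even (l.eraseIdx (i - 1)).length := by
    rw [List.length_eraseIdx_of_lt hi']
    exact hl.tsub_odd odd_one
  rw [partAt, List.getD_eq_getElem _ _ hi']
  refine psumFiltration_antitone ?_ (mul_mem_psumFiltration
    (qFun_mem_psumFiltration (hpos _ (List.getElem_mem hi'))) (hQ (i - 1) hi'))
  rw [shiftedRank_perm (List.getElem_cons_eraseIdx_perm hi').symm]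
  exact shiftedRank_cons_le _ herase

lemma evenExpansion_mem_psumFiltration {Q : List ℕ → MvPowerSeries ℕ ℚ} {x : ℕ}
    {l : List ℕ} (hl : Odd l.length)
    (hQpair : ∀ i (hi : i < l.length), Q [x, l[i]] ∈ psumFiltration (shiftedRank [x, l[i]]))
    (hQ : ∀ i < l.length, Q (l.eraseIdx i) ∈ psumFiltration (shiftedRank (l.eraseIdx i))) :
    ∑ i ∈ Finset.Icc 2 (x :: l).length, C ((-1 : ℚ) ^ i) *
        (Q [partAt (x :: l) 1, partAt (x :: l) i] * Q (((x :: l).eraseIdx (i - 1)).tail))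
      ∈ psumFiltration (shiftedRank (x :: l)) := by
  refine Submodule.sum_mem _ fun i hi => C_mul_mem _ _ ?_
  rw [Finset.mem_Icc, List.length_cons] at hi
  have hi' : i - 2 < l.length := by omega
  have hidx : i - 1 = i - 2 + 1 := by omega
  have herase : Even (l.eraseIdx (i - 2)).length := by
    rw [List.length_eraseIdx_of_lt hi']
    exact hl.tsub_odd odd_one
  rw [partAt, partAt, hidx, List.getD_cons_succ, List.getD_eq_getElem _ _ hi',
    List.getD_cons_zero, List.eraseIdx_cons_succ, List.tail_cons]
  refine psumFiltration_antitone ?_ (mul_mem_psumFiltration (hQpair _ hi') (hQ _ hi'))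
  rw [shiftedRank_perm ((List.getElem_cons_eraseIdx_perm hi').symm.cons x)]
  exact shiftedRank_append_le (l₁ := [x, l[i - 2]]) even_two herase

theorem schurQ_mem_psumFiltration (Q : List ℕ → MvPowerSeries ℕ ℚ)
    (hQ1 : ∀ a : ℕ, 0 < a → Q [a] = qFun a)
    (hQ2 : ∀ a b : ℕ, 0 < b → b < a →
      Q [a, b] = qFun a * qFun b +
        2 * ∑ m ∈ Finset.Icc 1 b,
          C ((-1 : ℚ) ^ m) * (qFun (a + m) * qFun (b - m)))
    (hQodd : ∀ l : List ℕ, l.Pairwise (· > ·) → (∀ x ∈ l, 0 < x) →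
      Odd l.length → 3 ≤ l.length →
      Q l = ∑ i ∈ Finset.Icc 1 l.length,
        C ((-1 : ℚ) ^ (i + 1)) *
          (qFun (partAt l i) * Q (l.eraseIdx (i - 1))))
    (hQeven : ∀ l : List ℕ, l.Pairwise (· > ·) → (∀ x ∈ l, 0 < x) →
      Even l.length → 4 ≤ l.length →
      Q l = ∑ i ∈ Finset.Icc 2 l.length,
        C ((-1 : ℚ) ^ i) *
          (Q [partAt l 1, partAt l i] * Q ((l.eraseIdx (i - 1)).tail)))
    {l : List ℕ} (hsort : l.Pairwise (· > ·)) (hpos : ∀ x ∈ l, 0 < x) (hne : l ≠ []) :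
    Q l ∈ psumFiltration (shiftedRank l) := by
  induction hN : l.length using Nat.strong_induction_on generalizing l with
  | _ N ih =>
  subst hN
  match l, hsort, hpos, hne, ih with
  | [a], _, hpos, _, _ =>
    rw [hQ1 a (hpos a (by simp)), shiftedRank_singleton]
    exact qFun_mem_psumFiltration (hpos a (by simp))
  | [a, b], hsort, hpos, _, _ =>
    have hba : b < a := List.rel_of_pairwise_cons hsort (by simp)
    rw [hQ2 a b (hpos b (by simp)) hba]
    exact qPair_mem_psumFiltration (hpos b (by simp)) hba
  | x :: y :: z :: l, hsort, hpos, _, ih =>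
    have ih' : ∀ l', l'.Sublist (x :: y :: z :: l) → l'.length < l.length + 3 →
        0 < l'.length → Q l' ∈ psumFiltration (shiftedRank l') := fun l' hsub hlt hne' =>
      ih _ hlt (hsort.sublist hsub) (fun y hy => hpos y (hsub.subset hy))
        (List.ne_nil_of_length_pos hne') rfl
    rcases Nat.even_or_odd (x :: y :: z :: l).length with heven | hodd
    · have h4 : 4 ≤ (x :: y :: z :: l).length := by
        obtain ⟨k, hk⟩ := heven
        simp only [List.length_cons] at hk ⊢
        omega
      rw [hQeven _ hsort hpos heven h4]
      refine evenExpansion_mem_psumFiltration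
        (Nat.not_even_iff_odd.mp (Nat.even_add_one.mp heven)) (fun i hi => ?_) (fun i hi => ?_)
      · have hmem := List.getElem_mem hi
        have hba := List.rel_of_pairwise_cons hsort hmem
        rw [hQ2 _ _ (hpos _ (List.mem_cons_of_mem x hmem)) hba]
        exact qPair_mem_psumFiltration (hpos _ (List.mem_cons_of_mem x hmem)) hba
      · exact ih' _ ((List.eraseIdx_sublist _ _).trans (List.sublist_cons_self _ _))
          (by simp [List.length_eraseIdx_of_lt hi]) (by simp [List.length_eraseIdx_of_lt hi])
    · rw [hQodd _ hsort hpos hodd (by simp)]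
      exact oddExpansion_mem_psumFiltration hpos hodd fun i hi =>
        ih' _ (List.eraseIdx_sublist _ _) (by simp [List.length_eraseIdx_of_lt hi])
          (by simp [List.length_eraseIdx_of_lt hi])

/-- Let `Q` satisfy Schur's inductive definition of the `Q`-functions (on strict
partitions, written as strictly decreasing lists of positive integers):
`Q_(a) = q_a`; `Q_(a,b) = q_a q_b + 2 Σ_{m>0} (-1)^m q_{a+m} q_{b-m}` (the terms with
`m > b` vanish since `q` of a negative index is `0`); for odd length `≥ 3`,
`Q_λ = Σ_i (-1)^{i+1} q_{λ_i} Q_{λ∖λ_i}`; for even length `≥ 4`,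
`Q_λ = Σ_{i≥2} (-1)^i Q_{(λ_1,λ_i)} Q_{λ∖{λ_1,λ_i}}`.
If `Q_λ = Σ_π c_π p_π`, summed over partitions `π` of `n`, then every `π` with `c_π ≠ 0`
satisfies `ℓ(π) ≥ srank(λ) = max(o, e + (ℓ(λ) mod 2))`. -/
theorem qschur_power_sum_length_bound
    (Q : List ℕ → MvPowerSeries ℕ ℚ)
    (hQ1 : ∀ a : ℕ, 0 < a → Q [a] = qFun a)
    (hQ2 : ∀ a b : ℕ, 0 < b → b < a →
      Q [a, b] = qFun a * qFun b +
        2 * ∑ m ∈ Finset.Icc 1 b,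
          MvPowerSeries.C (σ := ℕ) (R := ℚ) ((-1 : ℚ) ^ m) * (qFun (a + m) * qFun (b - m)))
    (hQodd : ∀ l : List ℕ, l.Pairwise (· > ·) → (∀ x ∈ l, 0 < x) →
      Odd l.length → 3 ≤ l.length →
      Q l = ∑ i ∈ Finset.Icc 1 l.length,
        MvPowerSeries.C (σ := ℕ) (R := ℚ) ((-1 : ℚ) ^ (i + 1)) *
          (qFun (partAt l i) * Q (l.eraseIdx (i - 1))))
    (hQeven : ∀ l : List ℕ, l.Pairwise (· > ·) → (∀ x ∈ l, 0 < x) →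
      Even l.length → 4 ≤ l.length →
      Q l = ∑ i ∈ Finset.Icc 2 l.length,
        MvPowerSeries.C (σ := ℕ) (R := ℚ) ((-1 : ℚ) ^ i) *
          (Q [partAt l 1, partAt l i] * Q ((l.eraseIdx (i - 1)).tail)))
    (n : ℕ) (l : List ℕ) (hl : IsStrictPartition n l)
    (c : Nat.Partition n → ℚ)
    (hc : Q l = ∑ π : Nat.Partition n, MvPowerSeries.C (σ := ℕ) (R := ℚ) (c π) * pProd π) :
    ∀ π : Nat.Partition n, c π ≠ 0 →
      max (l.countP (fun x => decide (Odd x)))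
        (l.countP (fun x => decide (Even x)) + l.length % 2) ≤ Multiset.card π.parts := by
  intro π hπ
  obtain ⟨hsort, hpos, -⟩ := hl
  rcases eq_or_ne l [] with rfl | hne
  · exact Nat.zero_le _
  have hmem := schurQ_mem_psumFiltration Q hQ1 hQ2 hQodd hQeven hsort hpos hne
  simp only [hc, ← smul_eq_C_mul] at hmem
  by_contra hlt
  exact hπ (coeff_eq_zero_of_sum_mem_psumFiltration hmem (not_le.mp hlt))
end
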